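/- arXiv:1803.04064 — 5 statements merged into one kernel-verified Lean document; each statement's English description precedes it below -/
import Mathlib

section
/- Let D be the dihedral group of order 2q with q odd, generated by σ, ρ with σ² = ρ^q = 1 and σρ = ρ⁻¹σ. Let G = ⟨ρ⟩ and let B be a D-module (an abelian group with D-action). Then the submodule I_G·B (the augmentation ideal of G applied to B) is contained in B^Σ + B^Σ', where Σ = ⟨σ⟩, Σ' = ⟨σρ⟩, and B^H denotes the subgroup of elements fixed by H. -/
open DihedralGroup

/-- The subgroup of points fixed by a subgroup `H` of the dihedral group. -/
def fixedBy {q : ℕ} (H : Subgroup (DihedralGroup q)) (B : Type*) [AddCommGroup B]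
    [DistribMulAction (DihedralGroup q) B] : AddSubgroup B where
  carrier := {b | ∀ h ∈ H, h • b = b}
  zero_mem' := fun h _ => smul_zero h
  add_mem' := by intro a b ha hb h hh; rw [smul_add, ha h hh, hb h hh]
  neg_mem' := by intro a ha h hh; rw [smul_neg, ha h hh]

/-- `I_G·B = (1-ρ)B`, the augmentation submodule for the rotation subgroup `G = ⟨ρ⟩`. -/
def augG (q : ℕ) (B : Type*) [AddCommGroup B]
    [DistribMulAction (DihedralGroup q) B] : AddSubgroup B :=
  AddMonoidHom.range
    { toFun := fun b => b - (r 1 : DihedralGroup q) • b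
      map_zero' := by simp
      map_add' := by intro x y; simp only [smul_add]; abel }

/-!
Both `σ` and `σρ` are involutions, and for an involution `s` every `x + s • x` is `s`-fixed.
Hence `b - ρ b = (b + σρ • b) - (ρ b + σ • ρ b)` splits `b - ρ b` into a `Σ'`-fixed and a
`Σ`-fixed element.
-/

lemma smul_add_smul_self_of_mul_self_eq_one {M B : Type*} [Monoid M] [AddCommMonoid B]
    [DistribMulAction M B] {s : M} (hs : s * s = 1) (x : B) :
    s • (x + s • x) = x + s • x := by
  rw [smul_add, smul_smul, hs, one_smul, add_comm]

lemma mem_fixedBy_closure_singleton {q : ℕ} {B : Type*} [AddCommGroup B]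
    [DistribMulAction (DihedralGroup q) B] {g : DihedralGroup q} {x : B} (hg : g • x = x) :
    x ∈ fixedBy (Subgroup.closure {g}) B := fun _ hh =>
  (Subgroup.closure_le (MulAction.stabilizer _ x)).2 (Set.singleton_subset_iff.2 hg) hh

lemma add_sr_smul_self_mem_fixedBy {q : ℕ} {B : Type*} [AddCommGroup B]
    [DistribMulAction (DihedralGroup q) B] (i : ZMod q) (x : B) :
    x + sr i • x ∈ fixedBy (Subgroup.closure {sr i}) B :=
  mem_fixedBy_closure_singleton (smul_add_smul_self_of_mul_self_eq_one (sr_mul_self i) x)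

theorem aug_le_fixed_sup_fixed_general (q : ℕ)
    (B : Type*) [AddCommGroup B] [DistribMulAction (DihedralGroup q) B] :
    augG q B ≤
      fixedBy (Subgroup.closure {(sr 0 : DihedralGroup q)}) B ⊔
        fixedBy (Subgroup.closure {(sr 0 * r 1 : DihedralGroup q)}) B := by
  rintro _ ⟨b, rfl⟩
  have hσ := add_sr_smul_self_mem_fixedBy (0 : ZMod q) ((r 1 : DihedralGroup q) • b)
  have hσρ : b + (sr 0 * r 1 : DihedralGroup q) • b ∈
      fixedBy (Subgroup.closure {(sr 0 * r 1 : DihedralGroup q)}) B := by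
    simpa only [sr_mul_r] using add_sr_smul_self_mem_fixedBy (0 + 1 : ZMod q) b
  refine AddSubgroup.mem_sup.2 ⟨_, neg_mem hσ, _, hσρ, ?_⟩
  change _ = b - (r 1 : DihedralGroup q) • b
  rw [mul_smul]
  abel

/-- For the dihedral group `D` of order `2q` (`q` odd) with `σ² = ρ^q = 1`,
`σρ = ρ⁻¹σ`, and any `D`-module `B`, the augmentation submodule `I_G·B` (for `G = ⟨ρ⟩`)
is contained in `B^Σ + B^Σ'`, where `Σ = ⟨σ⟩` and `Σ' = ⟨σρ⟩`. -/
theorem aug_le_fixed_sup_fixed (q : ℕ) [NeZero q] (hq : Odd q)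
    (B : Type*) [AddCommGroup B] [DistribMulAction (DihedralGroup q) B] :
    augG q B ≤
      fixedBy (Subgroup.closure {(sr 0 : DihedralGroup q)}) B ⊔
        fixedBy (Subgroup.closure {(sr 0 * r 1 : DihedralGroup q)}) B :=
  aug_le_fixed_sup_fixed_general q B
end

section
/- Let D be the dihedral group of order 2q with q odd, G its cyclic subgroup of order q, Σ = ⟨σ⟩, Σ' = ⟨σρ⟩ subgroups of order 2. For any D-module B, one has the equalities B^Σ + B^Σ' = B^Σ + I_G·B = B^Σ' + I_G·B. -/
open DihedralGroup

/-!
A reflection `τ` fixes `b + τ • b`, and `ρ = σ σ'`, so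
`b - ρ • b = (b + σ' • b) - (σ' • b + σ • (σ' • b))` lies in `B^Σ + B^Σ'`.
Conversely, since `q` is odd all reflections are conjugate under rotations: `B^Σ' = ρ^t • B^Σ`,
and every rotation moves `b` only by an element `ρ^t • b - b` of `I_G·B`.
-/

namespace DihedralGroup

variable {q : ℕ} {B : Type*} [AddCommGroup B] [DistribMulAction (DihedralGroup q) B]

lemma mem_fixedBy_closure_singleton {g : DihedralGroup q} {b : B} :
    b ∈ fixedBy (Subgroup.closure {g}) B ↔ g • b = b := by
  refine ⟨fun h => h g (Subgroup.mem_closure_singleton_self g), fun hb h hh => ?_⟩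
  induction hh using Subgroup.closure_induction with
  | mem x hx => rwa [Set.mem_singleton_iff.mp hx]
  | one => exact one_smul _ _
  | mul x y _ _ ihx ihy => rw [mul_smul, ihy, ihx]
  | inv x _ ihx => rw [← ihx, inv_smul_smul, ihx]

lemma smul_mem_fixedBy_closure_conj {g h : DihedralGroup q} {b : B}
    (hb : b ∈ fixedBy (Subgroup.closure {h}) B) :
    g • b ∈ fixedBy (Subgroup.closure {g * h * g⁻¹}) B := by
  rw [mem_fixedBy_closure_singleton] at hb ⊢
  rw [mul_smul, mul_smul, inv_smul_smul, hb]

lemma add_sr_smul_mem_fixedBy (i : ZMod q) (b : B) :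
    b + sr i • b ∈ fixedBy (Subgroup.closure {sr i}) B := by
  rw [mem_fixedBy_closure_singleton, smul_add, smul_smul, sr_mul_self, one_smul, add_comm]

lemma r_smul_sub_mem_augG (k : ZMod q) (b : B) : r k • b - b ∈ augG q B := by
  let H : Subgroup (DihedralGroup q) :=
    { carrier := {g | ∀ b : B, g • b - b ∈ augG q B}
      one_mem' := fun b => by simp
      mul_mem' := fun {g h} hg hh b => by
        simpa [mul_smul] using (augG q B).add_mem (hg (h • b)) (hh b)
      inv_mem' := fun {g} hg b => by
        simpa using (augG q B).neg_mem (hg (g⁻¹ • b)) }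
  have hr : r 1 ∈ H := fun b => by simpa using (augG q B).neg_mem ⟨b, rfl⟩
  rw [← ZMod.intCast_zmod_cast k, ← r_one_zpow]
  exact H.zpow_mem hr _ b

lemma augG_le_fixedBy_sup_fixedBy (i : ZMod q) :
    augG q B ≤
      fixedBy (Subgroup.closure {sr i}) B ⊔ fixedBy (Subgroup.closure {sr (i + 1)}) B := by
  rintro _ ⟨b, rfl⟩
  have hρ : sr i • sr (i + 1) • b = (r 1 : DihedralGroup q) • b := by
    rw [smul_smul, sr_mul_sr, add_sub_cancel_left]
  have hdecomp : b - (r 1 : DihedralGroup q) • b =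
      (b + sr (i + 1) • b) - (sr (i + 1) • b + sr i • sr (i + 1) • b) := by
    rw [hρ]; abel
  simp only [AddMonoidHom.coe_mk, ZeroHom.coe_mk, hdecomp]
  exact sub_mem (AddSubgroup.mem_sup_right (add_sr_smul_mem_fixedBy _ b))
    (AddSubgroup.mem_sup_left (add_sr_smul_mem_fixedBy i _))

lemma fixedBy_le_fixedBy_sup_augG (hq : Odd q) (i j : ZMod q) :
    fixedBy (Subgroup.closure {sr i}) B ≤ fixedBy (Subgroup.closure {sr j}) B ⊔ augG q B := by
  intro b hb
  obtain ⟨m, hm⟩ := hq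
  -- `2 (m + 1) = q + 1 ≡ 1`, so `k` is `(i - j) / 2`.
  set k : ZMod q := (m + 1) * (i - j)
  have hconj : r k * sr i * (r k)⁻¹ = sr j := by
    have hq0 : ((2 * m + 1 : ℕ) : ZMod q) = 0 := by rw [← hm, ZMod.natCast_self]
    rw [inv_r, r_mul_sr, sr_mul_r]
    push_cast at hq0
    congr 1
    linear_combination (j - i) * hq0
  have hdecomp : b = r k • b - (r k • b - b) := by abel
  rw [hdecomp]
  refine sub_mem (AddSubgroup.mem_sup_left ?_)
    (AddSubgroup.mem_sup_right (r_smul_sub_mem_augG k b))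
  rw [← hconj]
  exact smul_mem_fixedBy_closure_conj hb

end DihedralGroup

theorem fixed_sup_fixed_eq_fixed_sup_aug_general (q : ℕ) (hq : Odd q)
    (B : Type*) [AddCommGroup B] [DistribMulAction (DihedralGroup q) B] :
    fixedBy (Subgroup.closure {(sr 0 : DihedralGroup q)}) B ⊔
        fixedBy (Subgroup.closure {(sr 0 * r 1 : DihedralGroup q)}) B =
      fixedBy (Subgroup.closure {(sr 0 : DihedralGroup q)}) B ⊔ augG q B ∧
    fixedBy (Subgroup.closure {(sr 0 : DihedralGroup q)}) B ⊔
        fixedBy (Subgroup.closure {(sr 0 * r 1 : DihedralGroup q)}) B =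
      fixedBy (Subgroup.closure {(sr 0 * r 1 : DihedralGroup q)}) B ⊔ augG q B := by
  have hσ' : (sr 0 * r 1 : DihedralGroup q) = sr (0 + 1) := sr_mul_r 0 1
  rw [hσ']
  have hI := augG_le_fixedBy_sup_fixedBy (B := B) (0 : ZMod q)
  have hSigma := fixedBy_le_fixedBy_sup_augG (B := B) hq 0 (0 + 1)
  have hSigma' := fixedBy_le_fixedBy_sup_augG (B := B) hq (0 + 1) 0
  exact ⟨le_antisymm (sup_le le_sup_left hSigma') (sup_le le_sup_left hI),
    le_antisymm (sup_le hSigma le_sup_left) (sup_le le_sup_right hI)⟩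

/-- For the dihedral group `D` of order `2q` (`q` odd) with subgroups
`G = ⟨ρ⟩`, `Σ = ⟨σ⟩`, `Σ' = ⟨σρ⟩`, and any `D`-module `B`:
`B^Σ + B^Σ' = B^Σ + I_G·B = B^Σ' + I_G·B`. -/
theorem fixed_sup_fixed_eq_fixed_sup_aug (q : ℕ) [NeZero q] (hq : Odd q)
    (B : Type*) [AddCommGroup B] [DistribMulAction (DihedralGroup q) B] :
    fixedBy (Subgroup.closure {(sr 0 : DihedralGroup q)}) B ⊔
        fixedBy (Subgroup.closure {(sr 0 * r 1 : DihedralGroup q)}) B =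
      fixedBy (Subgroup.closure {(sr 0 : DihedralGroup q)}) B ⊔ augG q B ∧
    fixedBy (Subgroup.closure {(sr 0 : DihedralGroup q)}) B ⊔
        fixedBy (Subgroup.closure {(sr 0 * r 1 : DihedralGroup q)}) B =
      fixedBy (Subgroup.closure {(sr 0 * r 1 : DihedralGroup q)}) B ⊔ augG q B :=
  fixed_sup_fixed_eq_fixed_sup_aug_general q hq B
end

section
/- Let G be a finite cyclic group of order q, and let Δ = {1, δ} act on G with δ acting as inversion (g ↦ g⁻¹). For any G-module B on which this action extends compatibly, the Tate periodicity isomorphism Ĥⁱ(G, B) ≅ Ĥ^{i+2}(G, B), given by cup product with a generator χ of H²(G, Z), is Δ-antiequivariant: c_δ(x ∪ χ) = −(c_δ x) ∪ χ, because δ acts as −1 on H²(G, Z) ≅ Hom(G, Q/Z). -/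
open DihedralGroup

section Prelude

variable (q : ℕ) [NeZero q] (B : Type*) [AddCommGroup B]
  [DistribMulAction (DihedralGroup q) B]

/-- The norm map of the rotation subgroup `G = ⟨ρ⟩` of the dihedral group. -/
def normG : B →+ B where
  toFun b := ∑ i : ZMod q, (r i : DihedralGroup q) • b
  map_zero' := by simp
  map_add' x y := by simp [smul_add, Finset.sum_add_distrib]

/-- The explicit Tate periodicity map `Ĥ⁻¹(G, B) → Ĥ¹(G, B)`, cup product with a fixed
generator `χ` of `H²(G, ℤ)`: it sends (the class of) `b` with `N_G b = 0` to (the class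
of) the cocycle `ρ^i ↦ (1 + ρ + ⋯ + ρ^(i-1))·b`. -/
def cupWithChi (b : B) : ZMod q → B :=
  fun i => ∑ j ∈ Finset.range i.val, (r (j : ZMod q) : DihedralGroup q) • b

end Prelude

section Aux

variable (q : ℕ) [NeZero q] (B : Type*) [AddCommGroup B]
  [DistribMulAction (DihedralGroup q) B]

private def fsum (b : B) (n : ℕ) : B :=
  ∑ j ∈ Finset.range n, (r (j : ZMod q) : DihedralGroup q) • b

private lemma val_natCast (i : ZMod q) : ((i.val : ℕ) : ZMod q) = i := by
  simp [ZMod.natCast_val, ZMod.cast_id]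

private lemma fsum_add (b : B) (m n : ℕ) :
    fsum q B b (m + n)
      = fsum q B b m + (r (m : ZMod q) : DihedralGroup q) • fsum q B b n := by
  unfold fsum
  rw [Finset.sum_range_add, Finset.smul_sum]
  congr 1
  refine Finset.sum_congr rfl fun k _ => ?_
  rw [← mul_smul, r_mul_r, Nat.cast_add]

private lemma fsum_q (b : B) (hb : normG q B b = 0) : fsum q B b q = 0 := by
  have : fsum q B b q = normG q B b := by
    unfold fsum normG
    simp only [AddMonoidHom.coe_mk, ZeroHom.coe_mk]
    refine Finset.sum_nbij' (fun j => ((j : ZMod q))) (fun i => i.val) ?_ ?_ ?_ ?_ ?_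
    · intro a _; exact Finset.mem_univ _
    · intro a _; exact Finset.mem_range.2 (ZMod.val_lt a)
    · intro a ha; exact ZMod.val_natCast_of_lt (Finset.mem_range.1 ha)
    · intro a _; exact val_natCast q a
    · intro a _; rfl
  rw [this, hb]

private lemma fsum_mod (b : B) (hb : normG q B b = 0) (n : ℕ) :
    fsum q B b n = fsum q B b (n % q) := by
  conv_lhs => rw [← Nat.mod_add_div n q]
  generalize n / q = k
  induction k with
  | zero => simp
  | succ k ih =>
    rw [Nat.mul_succ, ← Nat.add_assoc, fsum_add, fsum_q q B b hb, smul_zero, add_zero, ih]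

private lemma cocycle (b : B) (hb : normG q B b = 0) (i j : ZMod q) :
    cupWithChi q B b (i + j)
      = cupWithChi q B b i + (r i : DihedralGroup q) • cupWithChi q B b j := by
  have h1 : cupWithChi q B b (i + j) = fsum q B b ((i + j).val) := rfl
  have h2 : cupWithChi q B b i = fsum q B b i.val := rfl
  have h3 : cupWithChi q B b j = fsum q B b j.val := rfl
  rw [h1, h2, h3, ZMod.val_add, ← fsum_mod q B b hb, fsum_add, val_natCast]

end Aux

/-- Let `G` be cyclic of order `q` (the rotation subgroup of the dihedral
group), and let `δ = σ` act on `G` by inversion.  For a module `B` with compatible action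
of the semidirect product, the Tate periodicity isomorphism `Ĥⁱ(G, B) ≅ Ĥ^(i+2)(G, B)`,
given on `i = -1` by cup product with a generator `χ` of `H²(G, ℤ)`, is
`Δ`-antiequivariant: `c_δ(x ∪ χ) = -(c_δ x) ∪ χ`.  Concretely: `δ` conjugates `r i` to
`r (-i)` (so `δ` acts as `-1` on `G` and hence on `Hom(G, ℚ/ℤ) ≅ H²(G, ℤ)`); for
`b ∈ B[N_G]` the function `cupWithChi b` is a 1-cocycle; and the cocycle
`cupWithChi (δ•b) + c_δ(cupWithChi b)` is a coboundary. -/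
theorem tate_periodicity_antiequivariant (q : ℕ) [NeZero q] (hq : Odd q)
    (B : Type*) [AddCommGroup B] [DistribMulAction (DihedralGroup q) B] :
    (∀ i : ZMod q, (sr 0 : DihedralGroup q)⁻¹ * r i * sr 0 = r (-i)) ∧
    ∀ b : B, normG q B b = 0 →
      (∀ i j : ZMod q,
        cupWithChi q B b (i + j)
          = cupWithChi q B b i + (r i : DihedralGroup q) • cupWithChi q B b j) ∧
      (∃ c : B, ∀ i : ZMod q,
        cupWithChi q B ((sr 0 : DihedralGroup q) • b) i
            + (sr 0 : DihedralGroup q) • cupWithChi q B b (-i)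
          = (r i : DihedralGroup q) • c - c) := by
  have hinv : (sr 0 : DihedralGroup q)⁻¹ = sr 0 :=
    inv_eq_of_mul_eq_one_left (sr_mul_self 0)
  have hconj : ∀ i : ZMod q, (sr 0 : DihedralGroup q)⁻¹ * r i * sr 0 = r (-i) := by
    intro i
    rw [hinv, sr_mul_r, sr_mul_sr]
    ring_nf
  refine ⟨hconj, fun b hb => ⟨cocycle q B b hb, ?_⟩⟩
  set δ : DihedralGroup q := sr 0 with hδ
  have hδr : ∀ (k : ZMod q) (x : B), δ • ((r k : DihedralGroup q) • x)
      = (r (-k) : DihedralGroup q) • (δ • x) := by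
    intro k x
    rw [← mul_smul, ← mul_smul, hδ, sr_mul_r, r_mul_sr]
    norm_num
  set b' : B := δ • b with hb'
  refine ⟨-b', fun i => ?_⟩
  rcases eq_or_ne q 1 with hq1 | hq1
  · subst hq1
    have hi : i = 0 := Subsingleton.elim i 0
    have hz : ∀ x : B, cupWithChi 1 B x 0 = 0 := by
      intro x
      show fsum 1 B x ((0 : ZMod 1).val) = 0
      rw [ZMod.val_zero]
      simp [fsum]
    simp only [hi, neg_zero, hz, smul_zero, add_zero, ← one_def, one_smul]
    abel
  have hq2 : 1 < q := Nat.lt_of_le_of_ne (Nat.one_le_iff_ne_zero.2 (NeZero.ne q)) (Ne.symm hq1)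
  -- norm of b' vanishes
  have hnb' : normG q B b' = 0 := by
    have step1 : (∑ i : ZMod q, (r i : DihedralGroup q) • b')
        = δ • ∑ i : ZMod q, (r (-i) : DihedralGroup q) • b := by
      rw [Finset.smul_sum]
      refine Finset.sum_congr rfl fun k _ => ?_
      rw [hδr, neg_neg]
    have step2 : (∑ i : ZMod q, (r (-i) : DihedralGroup q) • b)
        = ∑ i : ZMod q, (r i : DihedralGroup q) • b := by
      refine Fintype.sum_equiv (Equiv.neg (ZMod q)) _ _ fun k => ?_
      simp [Equiv.neg_apply]
    show (∑ i : ZMod q, (r i : DihedralGroup q) • b') = 0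
    rw [step1, step2]
    have : (∑ i : ZMod q, (r i : DihedralGroup q) • b) = normG q B b := rfl
    rw [this, hb, smul_zero]
  have hF := cocycle q B b' hnb'
  have key : δ • cupWithChi q B b (-i)
      = (r (i + 1) : DihedralGroup q) • cupWithChi q B b' (-i) := by
    show δ • fsum q B b ((-i).val) = (r (i + 1) : DihedralGroup q) • fsum q B b' ((-i).val)
    set n : ℕ := (-i).val with hn
    have hcast : ((n : ℕ) : ZMod q) = -i := val_natCast q (-i)
    unfold fsum
    rw [Finset.smul_sum, Finset.smul_sum]
    have lhs_eq : ∀ j ∈ Finset.range n,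
        δ • ((r (j : ZMod q) : DihedralGroup q) • b)
          = (r (-(j : ZMod q)) : DihedralGroup q) • b' := fun j _ => hδr _ _
    rw [Finset.sum_congr rfl lhs_eq, ← Finset.sum_range_reflect]
    refine Finset.sum_congr rfl fun j hj => ?_
    have hj' : j < n := Finset.mem_range.1 hj
    have h1n : 1 ≤ n := by omega
    have hjn : j ≤ n - 1 := by omega
    have hidx : -(((n - 1 - j : ℕ)) : ZMod q) = (i + 1) + (j : ZMod q) := by
      rw [Nat.cast_sub hjn, Nat.cast_sub h1n, hcast]
      ring
    rw [hidx, ← r_mul_r, mul_smul]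
  have hfirst : cupWithChi q B b' i = cupWithChi q B (δ • b) i := by rw [← hb']
  rw [← hfirst, key]
  have e1 : cupWithChi q B b' 1
      = cupWithChi q B b' (i + 1) + (r (i + 1) : DihedralGroup q) • cupWithChi q B b' (-i) := by
    have := hF (1 + i) (-i)
    have h1 : (1 : ZMod q) + i + -i = 1 := by ring
    have h2 : (1 : ZMod q) + i = i + 1 := by ring
    rw [h1, add_comm (1:ZMod q) i] at this
    exact this
  have e2 : cupWithChi q B b' (i + 1)
      = cupWithChi q B b' i + (r i : DihedralGroup q) • cupWithChi q B b' 1 :=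
    hF i 1
  have hr1 : (r (i + 1) : DihedralGroup q) • cupWithChi q B b' (-i)
      = cupWithChi q B b' 1 - cupWithChi q B b' (i + 1) := by
    rw [e1]; abel
  have hF1 : cupWithChi q B b' 1 = b' := by
    haveI : Fact (1 < q) := ⟨hq2⟩
    show fsum q B b' ((1 : ZMod q).val) = b'
    rw [ZMod.val_one]
    unfold fsum
    rw [Finset.sum_range_one]
    norm_num [← one_def]
  rw [hr1, e2, hF1]
  simp only [smul_neg, smul_sub, smul_add]
  abel
end

section
/- Let D be the dihedral group of order 2q with q odd, G its cyclic subgroup of order q, Σ, Σ' two distinct order-2 subgroups, and B a finite D-module on which multiplication by q is an automorphism. Then there is a direct-sum decomposition B/B^D ≅ B^G/B^D ⊕ (B^Σ + B^Σ')/B^D; consequently B/B^G ≅ B^Σ/B^D ⊕ B^Σ'/B^D. -/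
open DihedralGroup

namespace SplitAux

open Finset

set_option linter.unusedSectionVars false

section
variable {q : ℕ} [NeZero q] {B : Type*} [AddCommGroup B]
  [DistribMulAction (DihedralGroup q) B]

lemma mem_fixedBy {H : Subgroup (DihedralGroup q)} {b : B} :
    b ∈ fixedBy H B ↔ ∀ h ∈ H, h • b = b := Iff.rfl

lemma mem_fixedBy_closure {g : DihedralGroup q} {b : B} (h : g • b = b) :
    b ∈ fixedBy (Subgroup.closure {g}) B := by
  rw [mem_fixedBy]
  intro x hx
  refine Subgroup.closure_induction (fun y hy => ?_) (one_smul _ b)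
    (fun a c _ _ ha hc => ?_) (fun a _ ha => ?_) hx
  · rw [Set.mem_singleton_iff] at hy; subst hy; exact h
  · rw [mul_smul, hc, ha]
  · conv_lhs => rw [← ha]
    rw [← mul_smul, inv_mul_cancel, one_smul]

end

variable (q : ℕ) [NeZero q] {B : Type*} [AddCommGroup B]
  [DistribMulAction (DihedralGroup q) B]

/-- The norm sum over the rotation subgroup. -/
def NN (b : B) : B := ∑ j : ZMod q, (r j : DihedralGroup q) • b

def UU (b : B) : B := ∑ j ∈ range q, ((q : ℤ) - 1 - j) • ((r (j : ZMod q) : DihedralGroup q) • b)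

def UU' (b : B) : B := ∑ j ∈ range q, ((q : ℤ) - 1 - j) • ((r (-(j : ZMod q)) : DihedralGroup q) • b)

lemma NN_add (a b : B) : NN q (a + b) = NN q a + NN q b := by
  simp [NN, smul_add, Finset.sum_add_distrib]

lemma NN_sub (a b : B) : NN q (a - b) = NN q a - NN q b := by
  simp [NN, smul_sub, Finset.sum_sub_distrib]

lemma NN_r (k : ZMod q) (b : B) : NN q ((r k : DihedralGroup q) • b) = NN q b := by
  unfold NN
  refine Fintype.sum_equiv (Equiv.addRight k) _ _ fun j => ?_
  rw [← mul_smul, r_mul_r]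
  rfl

lemma r_smul_NN (k : ZMod q) (b : B) : (r k : DihedralGroup q) • NN q b = NN q b := by
  unfold NN
  rw [smul_sum]
  refine Fintype.sum_equiv (Equiv.addLeft k) _ _ fun j => ?_
  rw [← mul_smul, r_mul_r]
  rfl

lemma sr_smul_NN {k : ZMod q} {b : B} (h : (sr k : DihedralGroup q) • b = b) (m : ZMod q) :
    (sr m : DihedralGroup q) • NN q b = NN q b := by
  unfold NN
  rw [smul_sum]
  refine Fintype.sum_equiv (Equiv.subLeft (k - m)) _ _ fun j => ?_
  rw [← mul_smul, sr_mul_r]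
  have h1 : (sr (m + j) : DihedralGroup q) = r (k - m - j) * sr k := by
    rw [r_mul_sr]; congr 1; ring
  rw [h1, mul_smul, h]
  rfl

lemma NN_mem_top {k : ZMod q} {b : B} (h : (sr k : DihedralGroup q) • b = b) :
    NN q b ∈ fixedBy (⊤ : Subgroup (DihedralGroup q)) B := by
  rw [mem_fixedBy]
  intro d _
  cases d with
  | r j => exact r_smul_NN q j b
  | sr j => exact sr_smul_NN q h j

lemma r_pow_smul {b : B} (h : (r 1 : DihedralGroup q) • b = b) (n : ℕ) :
    ((r 1 : DihedralGroup q) ^ n) • b = b := by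
  induction n with
  | zero => simp
  | succ n ih => rw [pow_succ, mul_smul, h, ih]

lemma r_all_smul {b : B} (h : (r 1 : DihedralGroup q) • b = b) (j : ZMod q) :
    (r j : DihedralGroup q) • b = b := by
  have h1 : (r j : DihedralGroup q) = (r 1) ^ (j.val) := by
    rw [r_one_pow]
    congr 1
    simp [ZMod.natCast_val, ZMod.cast_id]
  rw [h1]
  exact r_pow_smul q h j.val

lemma NN_eq_q_smul {b : B} (h : (r 1 : DihedralGroup q) • b = b) : NN q b = (q : ℤ) • b := by
  unfold NN
  rw [Finset.sum_congr rfl fun j _ => r_all_smul q h j]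
  simp [ZMod.card]

lemma sr_smul_UU (k : ZMod q) (b : B) :
    (sr k : DihedralGroup q) • UU q b = UU' q ((sr k : DihedralGroup q) • b) := by
  unfold UU UU'
  rw [smul_sum]
  refine sum_congr rfl fun j _ => ?_
  rw [smul_comm, ← mul_smul, sr_mul_r, ← mul_smul, r_mul_sr]
  congr 2
  ring

lemma sr_smul_UU' (k : ZMod q) (b : B) :
    (sr k : DihedralGroup q) • UU' q b = UU q ((sr k : DihedralGroup q) • b) := by
  unfold UU UU'
  rw [smul_sum]
  refine sum_congr rfl fun j _ => ?_
  rw [smul_comm, ← mul_smul, sr_mul_r, ← mul_smul, r_mul_sr]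
  congr 2
  ring

lemma UU'_sr_one (b : B) :
    UU' q ((sr 1 : DihedralGroup q) • b)
      = (r (-1 : ZMod q) : DihedralGroup q) • UU' q ((sr 0 : DihedralGroup q) • b) := by
  unfold UU'
  rw [smul_sum]
  refine sum_congr rfl fun j _ => ?_
  conv_rhs => rw [smul_comm]
  have hgrp : (r (-(j : ZMod q)) : DihedralGroup q) • ((sr 1 : DihedralGroup q) • b)
      = (r (-1 : ZMod q) : DihedralGroup q) • ((r (-(j : ZMod q)) : DihedralGroup q)
          • ((sr 0 : DihedralGroup q) • b)) := calc (r (-(j : ZMod q)) : DihedralGroup q) • ((sr 1 : DihedralGroup q) • b)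
      = ((r (-(j : ZMod q)) * sr 1 : DihedralGroup q)) • b := (mul_smul _ _ _).symm
    _ = ((r (-1) * (r (-(j : ZMod q)) * sr 0) : DihedralGroup q)) • b := by
        rw [r_mul_sr, r_mul_sr, r_mul_sr]; congr 1; ring
    _ = (r (-1 : ZMod q) : DihedralGroup q) • ((r (-(j : ZMod q)) : DihedralGroup q)
          • ((sr 0 : DihedralGroup q) • b)) := by rw [mul_smul, mul_smul]
  rw [hgrp]

lemma sum_zmod {M : Type*} [AddCommMonoid M] (f : ZMod q → M) :
    ∑ i : ZMod q, f i = ∑ j ∈ range q, f (j : ZMod q) := by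
  refine Finset.sum_nbij' (fun i => i.val) (fun j => (j : ZMod q)) ?_ ?_ ?_ ?_ ?_ <;> intros <;>
    simp_all [ZMod.natCast_val, ZMod.cast_id, ZMod.val_lt, ZMod.val_natCast_of_lt,
      Finset.mem_range, Nat.mod_eq_of_lt]

lemma key (c : B) :
    (r (-1 : ZMod q) : DihedralGroup q) • UU' q c + (q : ℤ) • c
      = UU' q c + NN q c := by
  unfold NN
  obtain ⟨n, rfl⟩ : ∃ n, q = n + 1 :=
    ⟨q - 1, (Nat.succ_pred_eq_of_pos (Nat.pos_of_ne_zero (NeZero.ne q))).symm⟩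
  set F : ℕ → B := fun j => (r (-(j : ZMod (n+1))) : DihedralGroup (n+1)) • c with hF
  have hF0 : F 0 = c := by simp [hF, ← one_def]
  have hNN : (∑ j : ZMod (n+1), (r j : DihedralGroup (n+1)) • c) = ∑ j ∈ range (n+1), F j := by
    rw [Fintype.sum_equiv (Equiv.neg (ZMod (n+1))) _ (fun i => (r (-i) : DihedralGroup (n+1)) • c)
      (fun i => by simp)]
    exact sum_zmod (n+1) _
  have hshift : (r (-1 : ZMod (n+1)) : DihedralGroup (n+1)) • UU' (n+1) c
      = ∑ j ∈ range (n+1), (((n+1 : ℕ) : ℤ) - 1 - j) • F (j + 1) := by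
    unfold UU'
    rw [smul_sum]
    refine sum_congr rfl fun j _ => ?_
    rw [smul_comm, ← mul_smul, r_mul_r]
    have h2 : (-1 + -(j : ZMod (n+1))) = (-(((j+1 : ℕ) : ZMod (n+1)))) := by push_cast; ring
    rw [h2]
  have hUU' : UU' (n+1) c = ∑ j ∈ range (n+1), (((n+1 : ℕ) : ℤ) - 1 - j) • F j := rfl
  rw [hshift, hNN, hUU']
  have lhs_eq : (∑ j ∈ range (n+1), (((n+1 : ℕ) : ℤ) - 1 - j) • F (j + 1)) + ((n + 1 : ℕ) : ℤ) • c
      = ∑ j ∈ range (n+1), (((n+1 : ℕ) : ℤ) - j) • F j := by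
    rw [sum_range_succ, show (((n+1 : ℕ) : ℤ) - 1 - (n : ℤ)) = 0 by push_cast; ring, zero_smul,
      add_zero, sum_range_succ' (fun j => (((n+1 : ℕ) : ℤ) - j) • F j) n]
    congr 1
    · refine sum_congr rfl fun j _ => ?_
      congr 1
      push_cast; ring
    · rw [hF0]; norm_num
  have rhs_eq : (∑ j ∈ range (n+1), (((n+1 : ℕ) : ℤ) - 1 - j) • F j) + ∑ j ∈ range (n+1), F j
      = ∑ j ∈ range (n+1), (((n+1 : ℕ) : ℤ) - j) • F j := by
    rw [← sum_add_distrib]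
    refine sum_congr rfl fun j _ => ?_
    rw [show (((n+1 : ℕ) : ℤ) - j) = (((n+1 : ℕ) : ℤ) - 1 - j) + 1 by ring, add_smul, one_smul]
  rw [lhs_eq, rhs_eq]

end SplitAux

open SplitAux

/-- Let `D` be dihedral of order `2q` (`q` odd), with cyclic subgroup
`G = ⟨ρ⟩` and order-2 subgroups `Σ = ⟨σ⟩`, `Σ' = ⟨σρ⟩`, and let `B` be a finite
`D`-module on which multiplication by `q` is an automorphism.  Then there is a direct-sum
decomposition `B/B^D ≅ B^G/B^D ⊕ (B^Σ + B^Σ')/B^D`; consequently, upon taking the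
quotient by `B^G/B^D`, also `B/B^G ≅ B^Σ/B^D ⊕ B^Σ'/B^D`.  (The decompositions are
internal: the images of the relevant submodules in the quotient are complementary.) -/
theorem finite_module_split_dihedral (q : ℕ) [NeZero q] (hq : Odd q)
    (B : Type*) [AddCommGroup B] [Finite B]
    [DistribMulAction (DihedralGroup q) B]
    (hqdiv : Function.Bijective (fun b : B => (q : ℤ) • b)) :
    IsCompl
      ((fixedBy (Subgroup.closure {(r 1 : DihedralGroup q)}) B).map
        (QuotientAddGroup.mk' (fixedBy (⊤ : Subgroup (DihedralGroup q)) B)))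
      (((fixedBy (Subgroup.closure {(sr 0 : DihedralGroup q)}) B) ⊔
          (fixedBy (Subgroup.closure {(sr 0 * r 1 : DihedralGroup q)}) B)).map
        (QuotientAddGroup.mk' (fixedBy (⊤ : Subgroup (DihedralGroup q)) B))) ∧
    IsCompl
      ((fixedBy (Subgroup.closure {(sr 0 : DihedralGroup q)}) B).map
        (QuotientAddGroup.mk' (fixedBy (Subgroup.closure {(r 1 : DihedralGroup q)}) B)))
      ((fixedBy (Subgroup.closure {(sr 0 * r 1 : DihedralGroup q)}) B).map
        (QuotientAddGroup.mk' (fixedBy (Subgroup.closure {(r 1 : DihedralGroup q)}) B))) := by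
  have hσ' : (sr 0 * r 1 : DihedralGroup q) = sr 1 := by rw [sr_mul_r, zero_add]
  rw [hσ']
  have hinj := hqdiv.injective
  set ψ : B → B := fun b => (Equiv.ofBijective _ hqdiv).symm b with hψdef
  have hψ : ∀ c : B, (q : ℤ) • ψ c = c := fun c => (Equiv.ofBijective _ hqdiv).apply_symm_apply c
  have hψq : ∀ c : B, ψ ((q : ℤ) • c) = c := fun c => (Equiv.ofBijective _ hqdiv).symm_apply_apply c
  have hψd : ∀ (d : DihedralGroup q) (c : B), d • ψ c = ψ (d • c) := by
    intro d c
    apply hinj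
    show (q : ℤ) • (d • ψ c) = (q : ℤ) • ψ (d • c)
    rw [hψ, smul_comm, hψ]
  -- the explicit decomposition
  have decomp : ∀ b : B, ∃ g x y : B,
      g ∈ fixedBy (Subgroup.closure {(r 1 : DihedralGroup q)}) B ∧
      x ∈ fixedBy (Subgroup.closure {(sr 0 : DihedralGroup q)}) B ∧
      y ∈ fixedBy (Subgroup.closure {(sr 1 : DihedralGroup q)}) B ∧
      b = g + x + y := by
    intro b
    obtain ⟨c, hc⟩ : ∃ c : B, c = (sr 0 : DihedralGroup q) • b := ⟨_, rfl⟩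
    have hσσ : (sr 0 : DihedralGroup q) • c = b := by
      rw [hc, ← mul_smul, sr_mul_sr, sub_self, ← one_def, one_smul]
    refine ⟨-ψ (NN q c),
      b - ψ (UU q b) + c - ψ (UU' q c),
      ψ (UU q b) + (r (-1 : ZMod q) : DihedralGroup q) • ψ (UU' q c),
      ?_, ?_, ?_, ?_⟩
    · refine AddSubgroup.neg_mem _ (mem_fixedBy_closure ?_)
      rw [hψd, r_smul_NN]
    · apply mem_fixedBy_closure
      have e1 : (sr 0 : DihedralGroup q) • (b - ψ (UU q b) + c - ψ (UU' q c))
          = c - ψ (UU' q c) + b - ψ (UU q b) := by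
        rw [smul_sub, smul_add, smul_sub, hψd, hψd, sr_smul_UU, sr_smul_UU', ← hc, hσσ]
      rw [e1]; abel
    · apply mem_fixedBy_closure
      have e2 : (sr 1 : DihedralGroup q) • (ψ (UU q b)
            + (r (-1 : ZMod q) : DihedralGroup q) • ψ (UU' q c))
          = ψ (UU' q ((sr 1 : DihedralGroup q) • b)) + ψ (UU q b) := by
        rw [smul_add, hψd, sr_smul_UU, ← mul_smul, sr_mul_r,
          show ((1 : ZMod q) + -1) = 0 by ring, hψd, sr_smul_UU', hσσ]
      rw [e2, UU'_sr_one, ← hc, ← hψd, add_comm]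
    · have hkey : ψ (NN q c) = c - ψ (UU' q c)
          + (r (-1 : ZMod q) : DihedralGroup q) • ψ (UU' q c) := by
        apply hinj
        show (q : ℤ) • ψ (NN q c)
          = (q : ℤ) • (c - ψ (UU' q c) + (r (-1 : ZMod q) : DihedralGroup q) • ψ (UU' q c))
        rw [smul_add, smul_sub, hψ, hψ,
          smul_comm ((q : ℤ)) ((r (-1 : ZMod q)) : DihedralGroup q) (ψ (UU' q c)), hψ]
        have k := key q c
        calc NN q c = UU' q c + NN q c - UU' q c := by abel
          _ = (r (-1 : ZMod q) : DihedralGroup q) • UU' q c + (q : ℤ) • c - UU' q c := by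
              rw [← k]
          _ = (q : ℤ) • c - UU' q c + (r (-1 : ZMod q) : DihedralGroup q) • UU' q c := by abel
      rw [hkey]
      abel
  -- ψ preserves fixedBy ⊤
  have hfixtop : ∀ {w : B}, w ∈ fixedBy (⊤ : Subgroup (DihedralGroup q)) B →
      ψ w ∈ fixedBy (⊤ : Subgroup (DihedralGroup q)) B := by
    intro w hw
    rw [mem_fixedBy]
    intro d _
    rw [hψd, mem_fixedBy.mp hw d trivial]
  -- disjointness for the first splitting
  have hdisj1 : ∀ g w : B, g ∈ fixedBy (Subgroup.closure {(r 1 : DihedralGroup q)}) B →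
      w ∈ fixedBy (Subgroup.closure {(sr 0 : DihedralGroup q)}) B ⊔
        fixedBy (Subgroup.closure {(sr 1 : DihedralGroup q)}) B →
      g - w ∈ fixedBy (⊤ : Subgroup (DihedralGroup q)) B →
      g ∈ fixedBy (⊤ : Subgroup (DihedralGroup q)) B := by
    intro g w hg hw hgw
    obtain ⟨x, hx, y, hy, rfl⟩ := AddSubgroup.mem_sup.mp hw
    have hx0 : (sr 0 : DihedralGroup q) • x = x :=
      mem_fixedBy.mp hx _ (Subgroup.subset_closure rfl)
    have hy0 : (sr 1 : DihedralGroup q) • y = y :=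
      mem_fixedBy.mp hy _ (Subgroup.subset_closure rfl)
    have hd0 : (sr 0 : DihedralGroup q) • (g - (x + y)) = g - (x + y) :=
      mem_fixedBy.mp hgw _ trivial
    have hqg : (q : ℤ) • g ∈ fixedBy (⊤ : Subgroup (DihedralGroup q)) B := by
      have hgeq : (q : ℤ) • g = NN q x + NN q y + NN q (g - (x + y)) := by
        rw [← NN_add, ← NN_add, show x + y + (g - (x + y)) = g by abel]
        exact (NN_eq_q_smul q (mem_fixedBy.mp hg _ (Subgroup.subset_closure rfl))).symm
      rw [hgeq]
      exact add_mem (add_mem (NN_mem_top q hx0) (NN_mem_top q hy0)) (NN_mem_top q hd0)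
    have h5 := hfixtop hqg
    rwa [hψq] at h5
  -- disjointness for the second splitting
  have hdisj2 : ∀ x y : B, x ∈ fixedBy (Subgroup.closure {(sr 0 : DihedralGroup q)}) B →
      y ∈ fixedBy (Subgroup.closure {(sr 1 : DihedralGroup q)}) B →
      x - y ∈ fixedBy (Subgroup.closure {(r 1 : DihedralGroup q)}) B →
      x ∈ fixedBy (Subgroup.closure {(r 1 : DihedralGroup q)}) B := by
    intro x y hx hy hg
    have hσx : (sr 0 : DihedralGroup q) • x = x :=
      mem_fixedBy.mp hx _ (Subgroup.subset_closure rfl)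
    have hσ'y : (sr 1 : DihedralGroup q) • y = y :=
      mem_fixedBy.mp hy _ (Subgroup.subset_closure rfl)
    have hρg : (r 1 : DihedralGroup q) • (x - y) = x - y :=
      mem_fixedBy.mp hg _ (Subgroup.subset_closure rfl)
    have hρ'g : (r (-1 : ZMod q) : DihedralGroup q) • (x - y) = x - y := by
      have hmem : (r (-1 : ZMod q) : DihedralGroup q)
          ∈ Subgroup.closure {(r 1 : DihedralGroup q)} := by
        have hrinv : (r (-1 : ZMod q) : DihedralGroup q) = (r 1)⁻¹ := by
          apply eq_inv_of_mul_eq_one_left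
          rw [r_mul_r, show (-1 + 1 : ZMod q) = 0 by ring, ← one_def]
        rw [hrinv]
        exact inv_mem (Subgroup.subset_closure rfl)
      exact mem_fixedBy.mp hg _ hmem
    obtain ⟨z, hz⟩ : ∃ z : B, z = x - (r 1 : DihedralGroup q) • x := ⟨_, rfl⟩
    have h2 : (r 1 : DihedralGroup q) • x - (r 1 : DihedralGroup q) • y = x - y := by
      rw [← smul_sub, hρg]
    have hzy : z = y - (r 1 : DihedralGroup q) • y := by
      rw [hz]
      calc x - (r 1 : DihedralGroup q) • x
          = (x - y) - ((r 1 : DihedralGroup q) • x - (r 1 : DihedralGroup q) • y)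
            + (y - (r 1 : DihedralGroup q) • y) := by abel
        _ = y - (r 1 : DihedralGroup q) • y := by rw [h2]; abel
    have hσz : (sr 0 : DihedralGroup q) • z = x - (r (-1 : ZMod q) : DihedralGroup q) • x := by
      rw [hz, smul_sub, hσx, ← mul_smul, sr_mul_r, show ((0 : ZMod q) + 1) = 1 by ring]
      congr 1
      rw [show (sr 1 : DihedralGroup q) = r (-1) * sr 0 by rw [r_mul_sr]; congr 1; ring,
        mul_smul, hσx]
    have hσ'z : (sr 1 : DihedralGroup q) • z = y - (r (-1 : ZMod q) : DihedralGroup q) • y := by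
      rw [hzy, smul_sub, hσ'y, ← mul_smul, sr_mul_r]
      congr 1
      rw [show (sr ((1 : ZMod q) + 1) : DihedralGroup q) = r (-1) * sr 1 by
          rw [r_mul_sr]; congr 1; ring,
        mul_smul, hσ'y]
    have h3 : (r (-1 : ZMod q) : DihedralGroup q) • x
        - (r (-1 : ZMod q) : DihedralGroup q) • y = x - y := by
      rw [← smul_sub, hρ'g]
    have hσeq : (sr 0 : DihedralGroup q) • z = (sr 1 : DihedralGroup q) • z := by
      rw [hσz, hσ'z]
      calc x - (r (-1 : ZMod q) : DihedralGroup q) • x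
          = (x - y) - ((r (-1 : ZMod q) : DihedralGroup q) • x
              - (r (-1 : ZMod q) : DihedralGroup q) • y)
            + (y - (r (-1 : ZMod q) : DihedralGroup q) • y) := by abel
        _ = y - (r (-1 : ZMod q) : DihedralGroup q) • y := by rw [h3]; abel
    have hρz : (r 1 : DihedralGroup q) • z = z := by
      have h4 : (sr 0 : DihedralGroup q) • ((sr 1 : DihedralGroup q) • z)
          = (r 1 : DihedralGroup q) • z := by
        rw [← mul_smul, sr_mul_sr, show ((1 : ZMod q) - 0) = 1 by ring]
      have h5 : (sr 0 : DihedralGroup q) • ((sr 0 : DihedralGroup q) • z) = z := by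
        rw [← mul_smul, sr_mul_sr, sub_self, ← one_def, one_smul]
      rw [← h4, ← hσeq, h5]
    have hNz : (q : ℤ) • z = 0 := by
      rw [← NN_eq_q_smul q hρz, hz, NN_sub, NN_r, sub_self]
    have hz0 : z = 0 := by
      apply hinj
      show (q : ℤ) • z = (q : ℤ) • (0 : B)
      rw [hNz, smul_zero]
    apply mem_fixedBy_closure
    have h6 : x - (r 1 : DihedralGroup q) • x = 0 := by rw [← hz]; exact hz0
    exact (sub_eq_zero.mp h6).symm
  -- now assemble
  constructor
  · constructor
    · rw [AddSubgroup.disjoint_def]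
      intro u hu hu'
      obtain ⟨g, hg, rfl⟩ := AddSubgroup.mem_map.mp hu
      obtain ⟨w, hw, hwu⟩ := AddSubgroup.mem_map.mp hu'
      have hsub : g - w ∈ fixedBy (⊤ : Subgroup (DihedralGroup q)) B := by
        rw [← QuotientAddGroup.eq_iff_sub_mem]
        simpa [QuotientAddGroup.mk'_apply] using hwu.symm
      have hgt := hdisj1 g w hg hw hsub
      rw [QuotientAddGroup.mk'_apply, QuotientAddGroup.eq_zero_iff]
      exact hgt
    · rw [codisjoint_iff, AddSubgroup.eq_top_iff']
      intro u
      obtain ⟨b, rfl⟩ := QuotientAddGroup.mk'_surjective _ u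
      obtain ⟨g, x, y, hg, hx, hy, hb⟩ := decomp b
      have hbe : (QuotientAddGroup.mk' (fixedBy (⊤ : Subgroup (DihedralGroup q)) B)) b
          = (QuotientAddGroup.mk' _) g + (QuotientAddGroup.mk' _) (x + y) := by
        rw [← map_add]
        exact congrArg _ (by rw [hb]; abel)
      rw [hbe]
      exact add_mem
        (AddSubgroup.mem_sup_left (AddSubgroup.mem_map.mpr ⟨g, hg, rfl⟩))
        (AddSubgroup.mem_sup_right (AddSubgroup.mem_map.mpr
          ⟨x + y, add_mem (AddSubgroup.mem_sup_left hx) (AddSubgroup.mem_sup_right hy), rfl⟩))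
  · constructor
    · rw [AddSubgroup.disjoint_def]
      intro u hu hu'
      obtain ⟨x, hx, rfl⟩ := AddSubgroup.mem_map.mp hu
      obtain ⟨y, hy, hyu⟩ := AddSubgroup.mem_map.mp hu'
      have hsub : x - y ∈ fixedBy (Subgroup.closure {(r 1 : DihedralGroup q)}) B := by
        rw [← QuotientAddGroup.eq_iff_sub_mem]
        simpa [QuotientAddGroup.mk'_apply] using hyu.symm
      have hxG := hdisj2 x y hx hy hsub
      rw [QuotientAddGroup.mk'_apply, QuotientAddGroup.eq_zero_iff]
      exact hxG
    · rw [codisjoint_iff, AddSubgroup.eq_top_iff']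
      intro u
      obtain ⟨b, rfl⟩ := QuotientAddGroup.mk'_surjective _ u
      obtain ⟨g, x, y, hg, hx, hy, hb⟩ := decomp b
      have hsub : b - (x + y) ∈ fixedBy (Subgroup.closure {(r 1 : DihedralGroup q)}) B := by
        rw [hb, show g + x + y - (x + y) = g by abel]
        exact hg
      have hbe : (QuotientAddGroup.mk'
            (fixedBy (Subgroup.closure {(r 1 : DihedralGroup q)}) B)) b
          = (QuotientAddGroup.mk' _) x + (QuotientAddGroup.mk' _) y := by
        rw [← map_add]
        simp only [QuotientAddGroup.mk'_apply]
        exact QuotientAddGroup.eq_iff_sub_mem.mpr hsub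
      rw [hbe]
      exact add_mem
        (AddSubgroup.mem_sup_left (AddSubgroup.mem_map.mpr ⟨x, hx, rfl⟩))
        (AddSubgroup.mem_sup_right (AddSubgroup.mem_map.mpr ⟨y, hy, rfl⟩))
end

section
/- Let L/k be a dihedral extension of number fields of degree 2q with q odd, with quadratic subextension F and degree-q subextension K. Let G = Gal(L/F). Then μ(F) = μ(L) and μ(k) = μ(K) (equality of the groups of roots of unity), and there is an isomorphism of abelian groups ((U_L)^q ∩ U_F)/(U_F)^q ≅ I_G·U_L ∩ U_F, where the left side is a finite cyclic group; moreover this isomorphism interchanges the +1 and −1 eigenspaces for the action of Gal(F/k). -/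
/-!
Write `ρ = e⁻¹ (r 1)` and `σ = e⁻¹ (sr 0)`. As `σρσ = ρ⁻¹` and `q` is odd, `ρ` dies in every
abelian quotient of the Galois group, in particular in `Aut μ_n(L)`; so `ρ` fixes all roots of
unity, giving `μ(L) ⊆ F`, and a root of unity in `K` is fixed by the generators `ρ, σ`, hence
lies in `k`.

For `x = v ^ q ∈ U_L^q ∩ U_F` the unit `ρ v / v` does not depend on `v`, which is determined up
to a `q`-th root of unity. It is `ρ`-fixed, lies in `I_G U_L`, is trivial exactly when `v` can
be taken in `U_F`, and each `t = u / ρ u ∈ U_F` is the image of `u⁻¹ ^ q`: indeed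
`ρ^j u = u / t^j` and `ρ^q = 1` force `t^q = 1`. So the image consists of roots of unity and
is finite cyclic. Finally `ρσρ = σ` gives `ρ (σ v) / σ v = (σ (ρ v / v))⁻¹`.
-/

open DihedralGroup NumberField IntermediateField

section Setup

variable (q : ℕ) (k L : Type*) [Field k] [Field L] [NumberField k] [NumberField L]
  [Algebra k L] [IsGalois k L]

/-- The action of `g ∈ Gal(L/k)` on the units of `𝓞 L`. -/
noncomputable def uGal (g : L ≃ₐ[k] L) : (𝓞 L)ˣ →* (𝓞 L)ˣ :=
  Units.map (galRestrict (𝓞 k) k L (𝓞 L) g).toAlgHom.toRingHom.toMonoidHom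

variable (F : IntermediateField k L)

/-- The embedding `U_F → U_L` of unit groups. -/
noncomputable def unitsInto : (𝓞 ↥F)ˣ →* (𝓞 L)ˣ :=
  Units.map (RingOfIntegers.mapRingHom (algebraMap ↥F L)).toMonoidHom

/-- `(U_L)^q ∩ U_F` as a subgroup of `U_L`. -/
noncomputable def qPowCapUF : Subgroup (𝓞 L)ˣ :=
  (powMonoidHom q : (𝓞 L)ˣ →* (𝓞 L)ˣ).range ⊓ (unitsInto k L F).range

/-- `(U_F)^q` as a subgroup of `U_L`. -/
noncomputable def UFq : Subgroup (𝓞 L)ˣ :=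
  ((powMonoidHom q : (𝓞 ↥F)ˣ →* (𝓞 ↥F)ˣ).range).map (unitsInto k L F)

/-- `I_G·U_L` written multiplicatively: the subgroup generated by the `u/ρ(u)`. -/
noncomputable def IGUnits (e : (L ≃ₐ[k] L) ≃* DihedralGroup q) : Subgroup (𝓞 L)ˣ :=
  Subgroup.closure
    {x | ∃ u : (𝓞 L)ˣ, x = u * (uGal k L (e.symm (r 1)) u)⁻¹}

end Setup

namespace DihedralGroup

theorem map_r_one_eq_one_of_odd {n : ℕ} (hn : Odd n) {A : Type*} [CommGroup A]
    (f : DihedralGroup n →* A) : f (r 1) = 1 := by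
  have hconj : sr 0 * r 1 * sr 0 = (r 1 : DihedralGroup n)⁻¹ := by
    rw [sr_mul_r, sr_mul_sr, inv_r, zero_add, zero_sub]
  have hinv : (f (r 1))⁻¹ = f (r 1) := by
    rw [← map_inv, ← hconj, map_mul, map_mul, mul_right_comm, ← map_mul, sr_mul_sr, sub_self,
      r_zero, map_one, one_mul]
  have hsq : f (r 1) ^ 2 = 1 := by rw [sq, mul_eq_one_iff_eq_inv, hinv]
  obtain ⟨c, rfl⟩ := hn
  calc f (r 1) = f (r 1 ^ (2 * c + 1)) := by
        rw [map_pow, pow_succ, pow_mul, hsq, one_pow, one_mul]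
    _ = 1 := by rw [r_one_pow_n, map_one]

theorem closure_r_one_sr_zero (n : ℕ) :
    Subgroup.closure {r 1, sr 0} = (⊤ : Subgroup (DihedralGroup n)) := by
  have hr : ∀ i : ZMod n, r i ∈ Subgroup.closure {r 1, sr 0} := fun i => by
    rw [← ZMod.intCast_zmod_cast i, ← r_one_zpow]
    exact zpow_mem (Subgroup.subset_closure (by simp)) _
  refine eq_top_iff.mpr fun g _ => ?_
  rcases g with i | i
  · exact hr i
  · rw [← zero_add i, ← sr_mul_r]
    exact mul_mem (Subgroup.subset_closure (by simp)) (hr i)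

end DihedralGroup

def AlgEquiv.toMulAutRootsOfUnity (k L : Type*) [Field k] [Field L] [Algebra k L] (n : ℕ) :
    (L ≃ₐ[k] L) →* MulAut (rootsOfUnity n L) where
  toFun g := (g : L ≃* L).restrictRootsOfUnity n
  map_one' := by ext; rfl
  map_mul' _ _ := by ext; rfl

theorem map_r_one_apply_of_pow_eq_one {q : ℕ} (hq : Odd q) {k L : Type*} [Field k] [Field L]
    [Algebra k L] (φ : DihedralGroup q →* (L ≃ₐ[k] L)) {x : L} {n : ℕ} (hn : n ≠ 0)
    (hx : x ^ n = 1) : φ (r 1) x = x := by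
  -- `Aut μ_n(L) ≃* (ZMod _)ˣ` is abelian.
  have : NeZero n := ⟨hn⟩
  have hχ := map_r_one_eq_one_of_odd hq
    ((IsCyclic.mulAutMulEquiv (rootsOfUnity n L)).toMonoidHom.comp
      ((AlgEquiv.toMulAutRootsOfUnity k L n).comp φ))
  have hφ : AlgEquiv.toMulAutRootsOfUnity k L n (φ (r 1)) = 1 :=
    (IsCyclic.mulAutMulEquiv _).injective (by simpa using hχ)
  exact congrArg (fun f => ((f (rootsOfUnity.mkOfPowEq x hx) : Lˣ) : L)) hφ

theorem mem_fixedField_comap_closure_singleton_iff {k L G : Type*} [Field k] [Field L]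
    [Algebra k L] [Group G] (e : (L ≃ₐ[k] L) ≃* G) (g : G) (x : L) :
    x ∈ fixedField ((Subgroup.closure {g}).comap e.toMonoidHom) ↔ e.symm g x = x := by
  rw [mem_fixedField_iff]
  refine ⟨fun h => h _ (by simp [Subgroup.mem_closure_singleton_self]), fun h f hf => ?_⟩
  rw [Subgroup.mem_comap, ← Subgroup.zpowers_eq_closure] at hf
  obtain ⟨m, hm⟩ := Subgroup.mem_zpowers_iff.mp hf
  obtain rfl : f = e.symm g ^ m := by rw [← map_zpow, hm]; simp
  exact zpow_mem (show e.symm g ∈ MulAction.stabilizer (L ≃ₐ[k] L) x from h) m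

theorem mem_bot_of_apply_r_one_of_apply_sr_zero {q : ℕ} {k L : Type*} [Field k] [Field L]
    [Algebra k L] [IsGalois k L] [FiniteDimensional k L] (e : (L ≃ₐ[k] L) ≃* DihedralGroup q)
    {x : L} (hr : e.symm (r 1) x = x) (hs : e.symm (sr 0) x = x) :
    x ∈ (⊥ : IntermediateField k L) := by
  have hstab : (MulAction.stabilizer (L ≃ₐ[k] L) x).comap e.symm.toMonoidHom = ⊤ := by
    rw [eq_top_iff, ← closure_r_one_sr_zero, Subgroup.closure_le]
    rintro _ (rfl | rfl)
    exacts [hr, hs]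
  refine (IsGalois.mem_bot_iff_fixed x).mpr fun f => ?_
  have hf : e f ∈ (MulAction.stabilizer (L ≃ₐ[k] L) x).comap e.symm.toMonoidHom :=
    hstab ▸ Subgroup.mem_top _
  simpa using hf

-- `U` stands for `U_L`, `ρ` for the generator of `G`, and `H` for `U_F`, the `ρ`-fixed units.
section Kummer

variable {U : Type*} [CommGroup U] {q : ℕ} {ρ : U →* U} {H : Subgroup U}

theorem apply_div_self_eq_of_pow_eq (htors : ∀ ζ : U, ζ ^ q = 1 → ρ ζ = ζ) {v w : U}
    (h : v ^ q = w ^ q) : ρ v / v = ρ w / w := by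
  have hζ : ρ (v / w) = v / w := htors _ (by rw [div_pow, h, div_self'])
  rwa [map_div, ← div_eq_div_iff_div_eq_div] at hζ

theorem apply_div_self_mem (hH : ∀ u, u ∈ H ↔ ρ u = u) (htors : ∀ ζ : U, ζ ^ q = 1 → ρ ζ = ζ)
    {v : U} (hv : v ^ q ∈ H) : ρ v / v ∈ (MonoidHom.id U / ρ).range ⊓ H := by
  refine ⟨⟨v⁻¹, by simp [div_eq_mul_inv, mul_comm]⟩, (hH _).mpr ?_⟩
  rw [map_div]
  exact apply_div_self_eq_of_pow_eq htors (by rw [← map_pow, ← hH]; exact hv)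

theorem pow_eq_one_of_mem_range_div_inf (hH : ∀ u, u ∈ H ↔ ρ u = u) (hρq : ∀ u, ρ^[q] u = u)
    {t : U} (ht : t ∈ (MonoidHom.id U / ρ).range ⊓ H) : t ^ q = 1 := by
  obtain ⟨⟨u, rfl⟩, hfix⟩ := ht
  set t := (MonoidHom.id U / ρ) u
  have hρu : ρ u = u / t := by simp [t]
  have hρt : ρ t = t := (hH t).mp hfix
  have hiter : ∀ j : ℕ, ρ^[j] u = u / t ^ j := fun j => by
    induction j with
    | zero => simp
    | succ j ih =>
      rw [Function.iterate_succ_apply', ih, map_div, map_pow, hρt, hρu, pow_succ', div_div]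
  simpa [hiter] using hρq u

variable (q H) in
noncomputable def kummerRoot (x : ↥((powMonoidHom q : U →* U).range ⊓ H)) : U :=
  (Subgroup.mem_inf.mp x.2).1.choose

theorem kummerRoot_pow (x : ↥((powMonoidHom q : U →* U).range ⊓ H)) :
    kummerRoot q H x ^ q = (x : U) := by
  rw [← powMonoidHom_apply]
  exact (Subgroup.mem_inf.mp x.2).1.choose_spec

variable (q ρ H) in
noncomputable def kummerHom (hH : ∀ u, u ∈ H ↔ ρ u = u)
    (htors : ∀ ζ : U, ζ ^ q = 1 → ρ ζ = ζ) :
    ↥((powMonoidHom q : U →* U).range ⊓ H) →* ↥((MonoidHom.id U / ρ).range ⊓ H) :=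
  MonoidHom.mk' (fun x => ⟨ρ (kummerRoot q H x) / kummerRoot q H x,
      apply_div_self_mem hH htors (by rw [kummerRoot_pow]; exact x.2.2)⟩)
    fun x y => Subtype.ext <| by
      have hxy : kummerRoot q H (x * y) ^ q = (kummerRoot q H x * kummerRoot q H y) ^ q := by
        rw [kummerRoot_pow, mul_pow, kummerRoot_pow, kummerRoot_pow, Subgroup.coe_mul]
      exact (apply_div_self_eq_of_pow_eq htors hxy).trans (by rw [map_mul, mul_div_mul_comm]; rfl)

variable (hH : ∀ u, u ∈ H ↔ ρ u = u) (htors : ∀ ζ : U, ζ ^ q = 1 → ρ ζ = ζ)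

theorem kummerHom_apply {x : ↥((powMonoidHom q : U →* U).range ⊓ H)} {v : U}
    (hv : v ^ q = x) : (kummerHom q ρ H hH htors x : U) = ρ v / v :=
  apply_div_self_eq_of_pow_eq htors ((kummerRoot_pow x).trans hv.symm)

theorem ker_kummerHom : (kummerHom q ρ H hH htors).ker =
    (H.map (powMonoidHom q)).subgroupOf ((powMonoidHom q : U →* U).range ⊓ H) := by
  ext x
  obtain ⟨v, hv⟩ := MonoidHom.mem_range.mp (Subgroup.mem_inf.mp x.2).1
  rw [powMonoidHom_apply] at hv
  rw [MonoidHom.mem_ker, Subgroup.mem_subgroupOf, Subgroup.mem_map, ← Subtype.val_inj,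
    kummerHom_apply hH htors hv, OneMemClass.coe_one]
  constructor
  · exact fun hfix => ⟨v, (hH v).mpr (div_eq_one.mp hfix), hv⟩
  · rintro ⟨w, hw, hwx⟩
    rw [apply_div_self_eq_of_pow_eq htors (hv.trans hwx.symm), (hH w).mp hw, div_self']

theorem kummerHom_surjective (hρq : ∀ u, ρ^[q] u = u) :
    Function.Surjective (kummerHom q ρ H hH htors) := by
  rintro ⟨t, ht⟩
  have htq := pow_eq_one_of_mem_range_div_inf hH hρq ht
  obtain ⟨⟨u, rfl⟩, hfix⟩ := ht
  have hρv : ρ u⁻¹ = u⁻¹ * (MonoidHom.id U / ρ) u := by simp [inv_mul_cancel_left, div_eq_mul_inv]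
  have hvq : u⁻¹ ^ q ∈ H := by rw [hH, map_pow, hρv, mul_pow, htq, mul_one]
  refine ⟨⟨u⁻¹ ^ q, ⟨u⁻¹, rfl⟩, hvq⟩, Subtype.ext ?_⟩
  rw [kummerHom_apply hH htors rfl, hρv, mul_div_cancel_left]

variable (q ρ H) in
noncomputable def kummerEquiv (hρq : ∀ u, ρ^[q] u = u) :
    ↥((powMonoidHom q : U →* U).range ⊓ H) ⧸
        (H.map (powMonoidHom q)).subgroupOf ((powMonoidHom q : U →* U).range ⊓ H) ≃*
      ↥((MonoidHom.id U / ρ).range ⊓ H) :=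
  (QuotientGroup.quotientMulEquivOfEq (ker_kummerHom hH htors).symm).trans
    (QuotientGroup.quotientKerEquivOfSurjective _ (kummerHom_surjective hH htors hρq))

theorem kummerEquiv_mk (hρq : ∀ u, ρ^[q] u = u) (x : ↥((powMonoidHom q : U →* U).range ⊓ H)) :
    kummerEquiv q ρ H hH htors hρq x = kummerHom q ρ H hH htors x :=
  rfl

theorem kummerHom_apply_map {σ : U →* U} (hσ : ∀ u, ρ (σ (ρ u)) = σ u)
    (x : ↥((powMonoidHom q : U →* U).range ⊓ H)) (hσx : σ x ∈ (powMonoidHom q : U →* U).range ⊓ H) :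
    (kummerHom q ρ H hH htors ⟨σ x, hσx⟩ : U) = (σ (kummerHom q ρ H hH htors x))⁻¹ := by
  obtain ⟨v, hv⟩ : ∃ v, v ^ q = (x : U) := ⟨_, kummerRoot_pow x⟩
  have hρt := (hH _).mp (kummerHom q ρ H hH htors x).2.2
  have ht := kummerHom_apply hH htors hv
  set t := (kummerHom q ρ H hH htors x : U)
  have hρv : ρ v = v * t := by rw [ht, mul_div_cancel]
  have hρσv : ρ (σ v) = σ v * (σ t)⁻¹ :=
    calc ρ (σ v) = ρ (σ (ρ (v * t⁻¹))) := by rw [map_mul, map_inv, hρv, hρt, mul_inv_cancel_right]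
      _ = σ v * (σ t)⁻¹ := by rw [hσ, map_mul, map_inv]
  rw [kummerHom_apply hH htors (v := σ v) (by rw [← map_pow, hv]), hρσv, mul_div_cancel_left]

end Kummer

section Units

variable {q : ℕ} {k L : Type*} [Field k] [Field L] [Algebra k L]

theorem uGal_coe [NumberField k] [IsGalois k L] (g : L ≃ₐ[k] L) (u : (𝓞 L)ˣ) :
    ((uGal k L g u : 𝓞 L) : L) = g ((u : 𝓞 L) : L) :=
  algebraMap_galRestrict_apply (𝓞 k) g (u : 𝓞 L)

theorem uGal_eq_self_iff [NumberField k] [IsGalois k L] (g : L ≃ₐ[k] L) (u : (𝓞 L)ˣ) :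
    uGal k L g u = u ↔ g ((u : 𝓞 L) : L) = u := by
  rw [← uGal_coe, Units.ext_iff, RingOfIntegers.ext_iff]

theorem uGal_mul_apply [NumberField k] [IsGalois k L] (g h : L ≃ₐ[k] L) (u : (𝓞 L)ˣ) :
    uGal k L (g * h) u = uGal k L g (uGal k L h u) := by
  rw [Units.ext_iff, RingOfIntegers.ext_iff, uGal_coe, uGal_coe, uGal_coe, AlgEquiv.mul_apply]

theorem uGal_pow_apply [NumberField k] [IsGalois k L] (g : L ≃ₐ[k] L) (n : ℕ) (u : (𝓞 L)ˣ) :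
    uGal k L (g ^ n) u = (uGal k L g)^[n] u := by
  induction n with
  | zero => simp [Units.ext_iff, RingOfIntegers.ext_iff, uGal_coe]
  | succ n ih => rw [pow_succ', uGal_mul_apply, ih, Function.iterate_succ_apply']

theorem exists_mapRingHom_eq_of_mem (F : IntermediateField k L) {x : 𝓞 L} (hx : (x : L) ∈ F) :
    ∃ y : 𝓞 F, RingOfIntegers.mapRingHom (algebraMap F L) y = x :=
  ⟨⟨⟨x, hx⟩, (isIntegral_algebraMap_iff (algebraMap F L).injective).mp x.2⟩, rfl⟩

theorem mapRingHom_algebraMap_injective (F : IntermediateField k L) :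
    Function.Injective (RingOfIntegers.mapRingHom (algebraMap F L)) := fun _ _ h =>
  RingOfIntegers.ext <| Subtype.ext <| congrArg (fun z : 𝓞 L => (z : L)) h

theorem mem_range_unitsInto_iff (F : IntermediateField k L) (u : (𝓞 L)ˣ) :
    u ∈ (unitsInto k L F).range ↔ ((u : 𝓞 L) : L) ∈ F := by
  refine ⟨by rintro ⟨w, rfl⟩; exact ((w : 𝓞 F) : F).2, fun hu => ?_⟩
  have hinv : (((u⁻¹ : (𝓞 L)ˣ) : 𝓞 L) : L) ∈ F := by
    have h : (((u⁻¹ : (𝓞 L)ˣ) : 𝓞 L) : L) * ((u : 𝓞 L) : L) = 1 := by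
      rw [← map_mul, Units.inv_mul, map_one]
    rw [eq_inv_of_mul_eq_one_left h]
    exact inv_mem hu
  obtain ⟨a, ha⟩ := exists_mapRingHom_eq_of_mem F hu
  obtain ⟨b, hb⟩ := exists_mapRingHom_eq_of_mem F hinv
  have hab : a * b = 1 :=
    mapRingHom_algebraMap_injective F (by rw [map_mul, ha, hb, Units.mul_inv, map_one])
  exact ⟨⟨a, b, hab, (mul_comm b a).trans hab⟩, Units.ext ha⟩

theorem UFq_eq (F : IntermediateField k L) :
    UFq q k L F = (unitsInto k L F).range.map (powMonoidHom q) := by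
  rw [UFq, MonoidHom.range_eq_map, MonoidHom.range_eq_map, Subgroup.map_map, Subgroup.map_map]
  exact congrArg (Subgroup.map · ⊤) (MonoidHom.ext fun w => map_pow (unitsInto k L F) w q)

theorem IGUnits_eq [NumberField k] [IsGalois k L] (e : (L ≃ₐ[k] L) ≃* DihedralGroup q) :
    IGUnits q k L e = (MonoidHom.id _ / uGal k L (e.symm (r 1))).range := by
  refine (congrArg Subgroup.closure ?_).trans (Subgroup.closure_eq _)
  ext x
  simp [eq_comm, div_eq_mul_inv]

theorem NumberField.Units.finite_and_isCyclic_of_pow_eq_one [NumberField L]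
    {S : Subgroup (𝓞 L)ˣ} {n : ℕ} (hn : n ≠ 0) (hS : ∀ t ∈ S, t ^ n = 1) :
    Finite S ∧ IsCyclic S := by
  have hle : S ≤ torsion L := fun t ht =>
    isOfFinOrder_iff_pow_eq_one.mpr ⟨n, Nat.pos_of_ne_zero hn, hS t ht⟩
  exact ⟨Finite.of_injective _ (Subgroup.inclusion_injective hle), Subgroup.isCyclic_of_le hle⟩

end Units

section Dihedral

variable {q : ℕ} {k L : Type*} [Field k] [Field L] [NumberField k] [Algebra k L] [IsGalois k L]
  (e : (L ≃ₐ[k] L) ≃* DihedralGroup q)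

theorem uGal_r_one_apply_of_pow_eq_one (hq : Odd q) {ζ : (𝓞 L)ˣ} {n : ℕ} (hn : n ≠ 0)
    (hζ : ζ ^ n = 1) : uGal k L (e.symm (r 1)) ζ = ζ :=
  (uGal_eq_self_iff _ _).mpr <| map_r_one_apply_of_pow_eq_one hq e.symm.toMonoidHom hn <| by
    rw [← map_pow, ← Units.val_pow_eq_pow_val, hζ, Units.val_one, map_one]

theorem uGal_r_one_iterate (u : (𝓞 L)ˣ) : (uGal k L (e.symm (r 1)))^[q] u = u := by
  rw [← uGal_pow_apply, ← map_pow, r_one_pow_n, map_one, uGal_eq_self_iff, AlgEquiv.one_apply]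

theorem uGal_r_one_sr_zero_r_one (u : (𝓞 L)ˣ) :
    uGal k L (e.symm (r 1)) (uGal k L (e.symm (sr 0)) (uGal k L (e.symm (r 1)) u)) =
      uGal k L (e.symm (sr 0)) u := by
  rw [← uGal_mul_apply, ← uGal_mul_apply, ← map_mul, ← map_mul, r_mul_sr, sr_mul_r,
    sub_add_cancel]

theorem mem_range_unitsInto_iff_uGal_r_one {F : IntermediateField k L}
    (hF : F = fixedField ((Subgroup.closure {(r 1 : DihedralGroup q)}).comap e.toMonoidHom))
    (u : (𝓞 L)ˣ) : u ∈ (unitsInto k L F).range ↔ uGal k L (e.symm (r 1)) u = u := by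
  rw [mem_range_unitsInto_iff, hF, mem_fixedField_comap_closure_singleton_iff,
    uGal_eq_self_iff]

end Dihedral

/-- Let `L/k` be dihedral of degree `2q` (`q` odd), `F` the quadratic
subextension and `K` a degree-`q` subextension, `G = Gal(L/F) = ⟨ρ⟩`.  Then
`μ(F) = μ(L)` and `μ(k) = μ(K)`; there is an isomorphism of abelian groups
`((U_L)^q ∩ U_F)/(U_F)^q ≅ I_G·U_L ∩ U_F`, the left side being a finite cyclic group;
and the isomorphism is `Gal(F/k)`-antiequivariant (represented by `σ`), hence it
interchanges the `+1` and `-1` eigenspaces. -/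
theorem kummer_units_iso_dihedral (q : ℕ) [NeZero q] (hq : Odd q)
    (k L : Type*) [Field k] [Field L] [NumberField k] [NumberField L]
    [Algebra k L] [IsGalois k L]
    (e : (L ≃ₐ[k] L) ≃* DihedralGroup q)
    (F K : IntermediateField k L)
    (hF : F = fixedField ((Subgroup.closure {(r 1 : DihedralGroup q)}).comap e.toMonoidHom))
    (hK : K = fixedField ((Subgroup.closure {(sr 0 : DihedralGroup q)}).comap e.toMonoidHom)) :
    (∀ x : L, (∃ n : ℕ, 0 < n ∧ x ^ n = 1) → x ∈ F) ∧
    (∀ x : L, x ∈ K → (∃ n : ℕ, 0 < n ∧ x ^ n = 1) → x ∈ (⊥ : IntermediateField k L)) ∧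
    Finite (↥(qPowCapUF q k L F) ⧸ ((UFq q k L F).subgroupOf (qPowCapUF q k L F))) ∧
    IsCyclic (↥(qPowCapUF q k L F) ⧸ ((UFq q k L F).subgroupOf (qPowCapUF q k L F))) ∧
    ∃ Φ : (↥(qPowCapUF q k L F) ⧸ ((UFq q k L F).subgroupOf (qPowCapUF q k L F))) ≃*
        ↥(IGUnits q k L e ⊓ (unitsInto k L F).range),
      ∀ (x : ↥(qPowCapUF q k L F))
        (hσx : uGal k L (e.symm (sr 0)) (x : (𝓞 L)ˣ) ∈ qPowCapUF q k L F),
        ((Φ (QuotientGroup.mk ⟨uGal k L (e.symm (sr 0)) (x : (𝓞 L)ˣ), hσx⟩) : ↥(IGUnits q k L e ⊓ (unitsInto k L F).range)) : (𝓞 L)ˣ) =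
          (uGal k L (e.symm (sr 0))
            ((Φ (QuotientGroup.mk x) : ↥(IGUnits q k L e ⊓ (unitsInto k L F).range)) : (𝓞 L)ˣ))⁻¹ := by
  have hroots : ∀ x : L, (∃ n : ℕ, 0 < n ∧ x ^ n = 1) → e.symm (r 1) x = x :=
    fun x ⟨n, hn, hx⟩ => map_r_one_apply_of_pow_eq_one hq e.symm.toMonoidHom hn.ne' hx
  have hH := mem_range_unitsInto_iff_uGal_r_one e hF
  have htors : ∀ ζ : (𝓞 L)ˣ, ζ ^ q = 1 → uGal k L (e.symm (r 1)) ζ = ζ :=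
    fun _ => uGal_r_one_apply_of_pow_eq_one e hq (NeZero.ne q)
  rw [UFq_eq, IGUnits_eq, qPowCapUF]
  obtain ⟨hfinite, hcyclic⟩ := NumberField.Units.finite_and_isCyclic_of_pow_eq_one (NeZero.ne q)
    fun t => pow_eq_one_of_mem_range_div_inf hH (uGal_r_one_iterate e)
  let Φ := kummerEquiv q _ _ hH htors (uGal_r_one_iterate e)
  refine ⟨fun x hx => hF ▸ (mem_fixedField_comap_closure_singleton_iff e _ x).mpr (hroots x hx),
    fun x hxK hx => mem_bot_of_apply_r_one_of_apply_sr_zero e (hroots x hx)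
      ((hK ▸ mem_fixedField_comap_closure_singleton_iff e (sr 0) x).mp hxK),
    Finite.of_equiv _ Φ.symm.toEquiv, isCyclic_of_surjective Φ.symm Φ.symm.surjective, Φ,
    fun x hσx => ?_⟩
  rw [kummerEquiv_mk, kummerEquiv_mk]
  exact kummerHom_apply_map hH htors (uGal_r_one_sr_zero_r_one e) x hσx
end
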